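/- Let S = [[i,0],[0,1]] and let W be the 8×8 matrix W = (1/(2√2))·[[1,1,1,1,1,1,1,1],[−1,1,−1,1,−1,1,−1,1],[1,1,−1,−1,1,1,−1,−1],[−1,1,1,−1,−1,1,1,−1],[1,1,1,1,−1,−1,−1,−1],[−1,1,−1,1,1,−1,1,−1],[1,1,−1,−1,−1,−1,1,1],[−1,1,1,−1,1,−1,−1,1]]. Then S and W are unitary, and the basis {(S⊗W)|φ_{p,q}⟩: p∈{0,1}, q∈{0,…,7}} of C²⊗C⁸ is mutually unbiased with the basis {|φ_{n,m}⟩}: |⟨φ_{n,m}|(S⊗W)|φ_{p,q}⟩| = 1/4 for all n,p∈{0,1}, m,q∈{0,…,7}. -/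

import Mathlib

open scoped Kronecker

noncomputable def phi (d : ℕ) (n : Fin 2) (m : Fin d) : EuclideanSpace ℂ (Fin 2 × Fin d) :=
  WithLp.toLp 2 fun (p : Fin 2 × Fin d) =>
    (Real.sqrt 2 : ℂ)⁻¹ * (-1 : ℂ) ^ ((n : ℕ) * (p.1 : ℕ)) *
      (if (p.2 : ℕ) = (if (m : ℕ) = d - 1 then d - 1 else ((m : ℕ) + (p.1 : ℕ)) % (d - 1))
        then 1 else 0)

noncomputable def psi (d : ℕ) (S : Matrix (Fin 2) (Fin 2) ℂ) (W : Matrix (Fin d) (Fin d) ℂ)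
    (n : Fin 2) (m : Fin d) : EuclideanSpace ℂ (Fin 2 × Fin d) :=
  WithLp.toLp 2 ((S ⊗ₖ W).mulVec (phi d n m))

noncomputable def S₄ : Matrix (Fin 2) (Fin 2) ℂ := !![Complex.I, 0; 0, 1]

noncomputable def W₄ : Matrix (Fin 8) (Fin 8) ℂ :=
  ((2 * Real.sqrt 2 : ℝ) : ℂ)⁻¹ •
    !![ 1, 1,  1,  1,  1,  1,  1,  1;
       -1, 1, -1,  1, -1,  1, -1,  1;
        1, 1, -1, -1,  1,  1, -1, -1;
       -1, 1,  1, -1, -1,  1,  1, -1;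
        1, 1,  1,  1, -1, -1, -1, -1;
       -1, 1, -1,  1,  1, -1,  1, -1;
        1, 1, -1, -1, -1, -1,  1,  1;
       -1, 1,  1, -1,  1, -1, -1,  1]


-- ## Auxiliary evaluation lemmas
@[simp] lemma fv8_2 : ((2 : Fin 8) : ℕ) = 2 := rfl
@[simp] lemma fv8_3 : ((3 : Fin 8) : ℕ) = 3 := rfl
@[simp] lemma fv8_4 : ((4 : Fin 8) : ℕ) = 4 := rfl
@[simp] lemma fv8_5 : ((5 : Fin 8) : ℕ) = 5 := rfl
@[simp] lemma fv8_6 : ((6 : Fin 8) : ℕ) = 6 := rfl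
@[simp] lemma fv8_7 : ((7 : Fin 8) : ℕ) = 7 := rfl
@[simp] lemma fmk8_2 (h : (2:ℕ) < 8) : (⟨2, h⟩ : Fin 8) = (2 : Fin 8) := rfl
@[simp] lemma fmk8_3 (h : (3:ℕ) < 8) : (⟨3, h⟩ : Fin 8) = (3 : Fin 8) := rfl
@[simp] lemma fmk8_4 (h : (4:ℕ) < 8) : (⟨4, h⟩ : Fin 8) = (4 : Fin 8) := rfl
@[simp] lemma fmk8_5 (h : (5:ℕ) < 8) : (⟨5, h⟩ : Fin 8) = (5 : Fin 8) := rfl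
@[simp] lemma fmk8_6 (h : (6:ℕ) < 8) : (⟨6, h⟩ : Fin 8) = (6 : Fin 8) := rfl
@[simp] lemma fmk8_7 (h : (7:ℕ) < 8) : (⟨7, h⟩ : Fin 8) = (7 : Fin 8) := rfl

/-- Exponent for the sign pattern of the Hadamard-type matrix `W₄`. -/
def eAux (i j : Fin 8) : ℕ :=
  (i.val % 2) * (j.val + 1) + ((i.val / 2) % 2) * (j.val / 2) + ((i.val / 4) % 2) * (j.val / 4)

noncomputable def wAux (i j : Fin 8) : ℂ := if eAux i j % 2 = 0 then 1 else -1

noncomputable def WrawAux : Matrix (Fin 8) (Fin 8) ℂ :=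
    !![ 1, 1,  1,  1,  1,  1,  1,  1;
       -1, 1, -1,  1, -1,  1, -1,  1;
        1, 1, -1, -1,  1,  1, -1, -1;
       -1, 1,  1, -1, -1,  1,  1, -1;
        1, 1,  1,  1, -1, -1, -1, -1;
       -1, 1, -1,  1,  1, -1,  1, -1;
        1, 1, -1, -1, -1, -1,  1,  1;
       -1, 1,  1, -1,  1, -1, -1,  1]

lemma hWrawAux : ∀ i j, WrawAux i j = wAux i j := by
  intro i j; fin_cases i <;> fin_cases j <;> rfl

lemma hW4raw : W₄ = ((2 * Real.sqrt 2 : ℝ) : ℂ)⁻¹ • WrawAux := rfl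

lemma hW4entry (i j : Fin 8) : W₄ i j = ((2 * Real.sqrt 2 : ℝ) : ℂ)⁻¹ * wAux i j := by
  rw [hW4raw, Matrix.smul_apply, hWrawAux, smul_eq_mul]

set_option maxHeartbeats 1000000 in
lemma WrawAux_unitary : WrawAux * star WrawAux = (8:ℂ) • 1 := by
  ext i j
  fin_cases i <;> fin_cases j <;>
    norm_num [Matrix.mul_apply, Fin.sum_univ_eight, hWrawAux, wAux, eAux,
      Matrix.star_apply, Matrix.one_apply, Fin.ext_iff]

def fmAux (q : Fin 8) (a : Fin 2) : Fin 8 :=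
  if (q:ℕ) = 7 then (7 : Fin 8) else ⟨((q:ℕ) + (a:ℕ)) % 7, by omega⟩

set_option maxHeartbeats 1000000 in
lemma psi_apply (p : Fin 2) (q : Fin 8) (a : Fin 2) (k : Fin 8) :
    psi 8 S₄ W₄ p q (a, k) =
      (Real.sqrt 2 : ℂ)⁻¹ * (-1 : ℂ) ^ ((p : ℕ) * (a : ℕ)) *
        (if (a : ℕ) = 0 then Complex.I else 1) * W₄ k (fmAux q a) := by
  fin_cases q <;> fin_cases a <;>
    (simp only [psi, Matrix.mulVec, dotProduct, Fintype.sum_prod_type, Fin.sum_univ_two,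
      Fin.sum_univ_eight, Matrix.kroneckerMap_apply, phi, S₄, fmAux,
      Matrix.cons_val_zero, Matrix.cons_val_one, Matrix.head_cons]
     norm_num
     ring)

lemma phi_apply (n : Fin 2) (m : Fin 8) (a : Fin 2) (k : Fin 8) :
    phi 8 n m (a, k) = (Real.sqrt 2 : ℂ)⁻¹ * (-1 : ℂ) ^ ((n : ℕ) * (a : ℕ)) *
      (if k = fmAux m a then 1 else 0) := by
  simp only [phi]
  congr 1
  by_cases h : (m : ℕ) = 7 <;> simp [fmAux, h, Fin.ext_iff]

lemma phi_conj (n : Fin 2) (m : Fin 8) (a : Fin 2) (k : Fin 8) :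
    (starRingEnd ℂ) (phi 8 n m (a, k)) = (Real.sqrt 2 : ℂ)⁻¹ * (-1 : ℂ) ^ ((n : ℕ) * (a : ℕ)) *
      (if k = fmAux m a then 1 else 0) := by
  rw [phi_apply]
  split_ifs <;> simp

lemma inner_formula (n p : Fin 2) (m q : Fin 8) :
    (inner ℂ (phi 8 n m) (psi 8 S₄ W₄ p q) : ℂ) =
      ((Real.sqrt 2 : ℂ)⁻¹ * (Real.sqrt 2 : ℂ)⁻¹ * ((2 * Real.sqrt 2 : ℝ) : ℂ)⁻¹) *
        (Complex.I * wAux (fmAux m 0) (fmAux q 0) +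
          (-1 : ℂ) ^ ((n : ℕ) + (p : ℕ)) * wAux (fmAux m 1) (fmAux q 1)) := by
  simp only [PiLp.inner_apply, RCLike.inner_apply, Fintype.sum_prod_type, Fin.sum_univ_two,
    phi_conj, psi_apply, hW4entry, mul_ite, ite_mul, mul_one, mul_zero, zero_mul,
    Finset.sum_ite_eq', Finset.sum_ite_eq, Finset.mem_univ, if_true]
  simp
  ring

lemma wAux_cases (i j : Fin 8) : wAux i j = 1 ∨ wAux i j = -1 := by
  unfold wAux; split_ifs <;> simp

lemma norm_I_pm (s t : ℂ) (hs : s = 1 ∨ s = -1) (ht : t = 1 ∨ t = -1) :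
    ‖Complex.I * s + t‖ = Real.sqrt 2 := by
  rcases hs with rfl | rfl <;> rcases ht with rfl | rfl <;>
    simp [Complex.norm_def, Complex.normSq_apply] <;> norm_num

set_option maxHeartbeats 16000000 in
/-- Example 4: `S = [[i,0],[0,1]]` and the given `8×8` matrix `W` are unitary, and the bases
`{|φ_{n,m}⟩}` and `{(S⊗W)|φ_{p,q}⟩}` of `C² ⊗ C⁸` are mutually unbiased:
`|⟨φ_{n,m}|(S⊗W)|φ_{p,q}⟩| = 1/4`. -/
theorem example4_mub_C2xC8 :
    S₄ ∈ Matrix.unitaryGroup (Fin 2) ℂ ∧ W₄ ∈ Matrix.unitaryGroup (Fin 8) ℂ ∧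
    ∀ (n p : Fin 2) (m q : Fin 8),
      ‖(inner ℂ (phi 8 n m) (psi 8 S₄ W₄ p q) : ℂ)‖ = 1 / 4 := by
  have hs : Real.sqrt 2 * Real.sqrt 2 = 2 := Real.mul_self_sqrt (by norm_num)
  have hs0 : Real.sqrt 2 ≠ 0 := by positivity
  refine ⟨?_, ?_, ?_⟩
  · rw [Matrix.mem_unitaryGroup_iff]
    ext i j
    fin_cases i <;> fin_cases j <;>
      simp [S₄, Matrix.mul_apply, Fin.sum_univ_two, Matrix.one_apply, Matrix.star_apply,
        Complex.ext_iff]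
  · rw [Matrix.mem_unitaryGroup_iff, hW4raw, star_smul, Matrix.smul_mul, Matrix.mul_smul,
      WrawAux_unitary, smul_smul, smul_smul]
    have h2 : ((2 * Real.sqrt 2 : ℝ) : ℂ)⁻¹ * star ((2 * Real.sqrt 2 : ℝ) : ℂ)⁻¹ * (8:ℂ) = 1 := by
      rw [Complex.star_def, ← Complex.ofReal_inv, Complex.conj_ofReal]
      have h8 : ((2 * Real.sqrt 2 : ℝ))⁻¹ * ((2 * Real.sqrt 2 : ℝ))⁻¹ * 8 = 1 := by
        field_simp
        nlinarith [hs]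
      exact_mod_cast congrArg (fun t : ℝ => (t : ℂ)) h8
    rw [h2, one_smul]
  · intro n p m q
    rw [inner_formula, norm_mul, norm_I_pm _ _ (wAux_cases _ _)]
    · have h2 : (0:ℝ) < 2 * Real.sqrt 2 := by positivity
      simp only [norm_mul, norm_inv, Complex.norm_real, Real.norm_eq_abs, abs_of_pos h2, abs_two,
        abs_of_pos (by positivity : (0:ℝ) < Real.sqrt 2)]
      field_simp
      nlinarith [hs]
    · rcases neg_one_pow_eq_or ℂ ((n : ℕ) + (p : ℕ)) with h | h <;>
        rcases wAux_cases (fmAux m 1) (fmAux q 1) with h' | h' <;> simp [h, h']
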